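/- Fix an integer n ≥ 1, complex constants α_0, α_1, …, α_n, and an index 1 ≤ l ≤ n. Define the vector field Z : ℂⁿ → ℂⁿ by Z(x) = α_0 · u(x) · D(x) − u(x) · Σ_{m=1}^n α_m · Y^m_m(x), where D(x)_i = x_i. Then [Y^l_l, Z](x) = 0 for every x ∈ ℂⁿ with u(x) ≠ 0. -/

import Mathlib

/-!
On `{u ≠ 0}` the field `Z` coincides with the polynomial field `(α₀ u - ⟨α, x⟩) x + u (α ⊙ x)`,
and the bracket at a point only depends on germs, so `Z` may be replaced by it. Writing
`Y^l_l = (x_l / u) (x - u e_l)`, the identities `u(Y^l_l) = 0` and `u(Z) = α₀ u²` make the two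
directional derivatives in `[Y^l_l, Z]` cancel.
-/

/-- `u x = ∑ j x_j`. -/
noncomputable def u (n : ℕ) (x : Fin n → ℂ) : ℂ := ∑ j, x j

/-- The vector fields `Y^l_m`, with components
`Y^l_m(x)_i = x_m * u(x)^(l-m-1) * (x_i - δ_{i,l} u(x))` (integer power); in particular
the diagonal ones are `Y^m_m(x)_i = x_m * u(x)⁻¹ * (x_i - δ_{i,m} u(x))`. -/
noncomputable def Y (n : ℕ) (l m : Fin n) (x : Fin n → ℂ) : Fin n → ℂ :=
  fun i => x m * u n x ^ ((l : ℤ) - (m : ℤ) - 1) * (x i - if i = l then u n x else 0)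

/-- The Lie bracket `[V,W](x) = DW(x)·V(x) - DV(x)·W(x)`. -/
noncomputable def lieBracket (n : ℕ) (V W : (Fin n → ℂ) → Fin n → ℂ)
    (x : Fin n → ℂ) : Fin n → ℂ :=
  fderiv ℂ W x (V x) - fderiv ℂ V x (W x)

open ContinuousLinearMap Filter Topology

section

variable {n : ℕ}

noncomputable def uCLM (n : ℕ) : (Fin n → ℂ) →L[ℂ] ℂ := ∑ j, proj j

@[simp]
lemma uCLM_apply (v : Fin n → ℂ) : uCLM n v = u n v := by
  simp [uCLM, u]

lemma hasFDerivAt_u (x : Fin n → ℂ) : HasFDerivAt (u n) (uCLM n) x := by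
  convert (uCLM n).hasFDerivAt using 1
  ext y
  simp

@[simp]
lemma u_add (v w : Fin n → ℂ) : u n (v + w) = u n v + u n w := by
  simp only [← uCLM_apply, map_add]

@[simp]
lemma u_sub (v w : Fin n → ℂ) : u n (v - w) = u n v - u n w := by
  simp only [← uCLM_apply, map_sub]

@[simp]
lemma u_smul (a : ℂ) (v : Fin n → ℂ) : u n (a • v) = a * u n v := by
  simp only [← uCLM_apply, map_smul, smul_eq_mul]

@[simp]
lemma u_single (l : Fin n) (a : ℂ) : u n (Pi.single l a) = a := by
  simp [u]

lemma Y_diag_eq (l : Fin n) :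
    Y n l l = fun y => (y l * (u n y)⁻¹) • (y - Pi.single l (u n y)) := by
  ext y i
  simp [Y, Pi.single_apply]

lemma fderiv_Y_diag_apply (l : Fin n) (x v : Fin n → ℂ) (hx : u n x ≠ 0) :
    fderiv ℂ (Y n l l) x v =
      ((v l * u n x - x l * u n v) / u n x ^ 2) • (x - Pi.single l (u n x))
        + (x l / u n x) • (v - Pi.single l (u n v)) := by
  have hc : HasFDerivAt (fun y : Fin n → ℂ => y l * (u n y)⁻¹) _ x :=
    (hasFDerivAt_apply l x).mul ((hasFDerivAt_inv' hx).comp x (hasFDerivAt_u x))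
  have hd : HasFDerivAt (fun y : Fin n → ℂ => y - Pi.single l (u n y)) _ x :=
    (hasFDerivAt_id x).sub ((single ℂ (fun _ : Fin n => ℂ) l).hasFDerivAt.comp x (hasFDerivAt_u x))
  rw [Y_diag_eq, (hc.fun_smul hd).fderiv]
  simp only [neg_comp, smul_neg, add_apply, smul_apply, sub_apply, id_apply, comp_apply, uCLM_apply,
    single_apply, smulRight_apply, neg_apply, mulLeftRight_apply, smul_eq_mul, proj_apply]
  rw [add_comm]
  congr 2
  field_simp
  ring

noncomputable def polyZ (α₀ : ℂ) (α y : Fin n → ℂ) : Fin n → ℂ :=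
  (α₀ * u n y - u n (α * y)) • y + u n y • (α * y)

lemma fderiv_polyZ_apply (α₀ : ℂ) (α x v : Fin n → ℂ) :
    fderiv ℂ (polyZ α₀ α) x v =
      (α₀ * u n v - u n (α * v)) • x + (α₀ * u n x - u n (α * x)) • v
        + u n v • (α * x) + u n x • (α * v) := by
  have hα : HasFDerivAt (fun y : Fin n → ℂ => α * y) _ x := (hasFDerivAt_id (𝕜 := ℂ) x).const_mul α
  have hh : HasFDerivAt (fun y : Fin n → ℂ => α₀ * u n y - u n (α * y)) _ x :=
    ((hasFDerivAt_u x).const_mul α₀).sub ((hasFDerivAt_u _).comp x hα)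
  have hZ : HasFDerivAt (polyZ α₀ α) _ x :=
    (hh.fun_smul (hasFDerivAt_id (𝕜 := ℂ) x)).fun_add ((hasFDerivAt_u x).fun_smul hα)
  rw [hZ.fderiv]
  simp only [id_eq, add_apply, smul_apply, id_apply, smulRight_apply, sub_apply, uCLM_apply,
    smul_eq_mul, comp_apply]
  module

lemma u_mul_Y_diag (l : Fin n) (c y : Fin n → ℂ) :
    u n (c * Y n l l y) = y l * (u n y)⁻¹ * (u n (c * y) - c l * u n y) := by
  rw [Y_diag_eq, mul_smul_comm, mul_sub, ← Pi.single_mul_right]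
  simp

lemma u_Y_diag (l : Fin n) (y : Fin n → ℂ) : u n (Y n l l y) = 0 := by
  simpa using u_mul_Y_diag l 1 y

lemma u_polyZ (α₀ : ℂ) (α y : Fin n → ℂ) : u n (polyZ α₀ α y) = α₀ * u n y ^ 2 := by
  simp only [polyZ, u_add, u_smul]
  ring

lemma sum_mul_Y_diag_apply {y : Fin n → ℂ} (hy : u n y ≠ 0) (α : Fin n → ℂ) (i : Fin n) :
    u n y * ∑ m, α m * Y n m m y i = u n (α * y) * y i - u n y * (α i * y i) := by
  have hsum : ∑ m, α m * (y m * (u n y)⁻¹ * y i) = u n (α * y) * ((u n y)⁻¹ * y i) := by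
    rw [show u n (α * y) = ∑ m, α m * y m from rfl, Finset.sum_mul]
    exact Finset.sum_congr rfl fun m _ => by ring
  simp only [Y_diag_eq, Pi.smul_apply, Pi.sub_apply, Pi.single_apply, smul_eq_mul, mul_sub,
    Finset.sum_sub_distrib, mul_ite, mul_zero, Finset.sum_ite_eq, Finset.mem_univ, if_true, hsum]
  field_simp

lemma lieBracket_congr_right {V W W' : (Fin n → ℂ) → Fin n → ℂ} {x : Fin n → ℂ}
    (h : W =ᶠ[𝓝 x] W') : lieBracket n V W x = lieBracket n V W' x := by
  rw [lieBracket, lieBracket, h.fderiv_eq, h.eq_of_nhds]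

lemma lieBracket_Y_diag_polyZ (l : Fin n) (α₀ : ℂ) (α : Fin n → ℂ) {x : Fin n → ℂ}
    (hx : u n x ≠ 0) : lieBracket n (Y n l l) (polyZ α₀ α) x = 0 := by
  rw [lieBracket, fderiv_polyZ_apply, fderiv_Y_diag_apply l x _ hx, u_Y_diag, u_mul_Y_diag, u_polyZ]
  ext i
  simp only [mul_zero, zero_sub, neg_smul, Y_diag_eq, zero_smul, add_zero, Algebra.mul_smul_comm,
    polyZ, Pi.add_apply, Pi.smul_apply, smul_eq_mul, Pi.mul_apply, Pi.sub_apply, Pi.neg_apply,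
    Pi.single_apply, Pi.zero_apply]
  split_ifs with hil
  · subst hil
    field_simp
    ring
  · field_simp
    ring

lemma eventuallyEq_polyZ {α₀ : ℂ} {α : Fin n → ℂ} {Z : (Fin n → ℂ) → Fin n → ℂ}
    (hZ : ∀ x i, Z x i = α₀ * u n x * x i - u n x * ∑ m : Fin n, α m * Y n m m x i)
    {x : Fin n → ℂ} (hx : u n x ≠ 0) : Z =ᶠ[𝓝 x] polyZ α₀ α := by
  filter_upwards [(hasFDerivAt_u x).continuousAt.eventually_ne hx] with y hy
  ext i
  rw [hZ, sum_mul_Y_diag_apply hy]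
  simp only [polyZ, Pi.add_apply, Pi.smul_apply, Pi.mul_apply, smul_eq_mul]
  ring

end

theorem stmt_9_general (n : ℕ) (α₀ : ℂ) (α : Fin n → ℂ) (l : Fin n)
    (Z : (Fin n → ℂ) → Fin n → ℂ)
    (hZ : ∀ x i, Z x i = α₀ * u n x * x i - u n x * ∑ m : Fin n, α m * Y n m m x i) :
    ∀ x : Fin n → ℂ, u n x ≠ 0 → lieBracket n (Y n l l) Z x = 0 := by
  intro x hx
  rw [lieBracket_congr_right (eventuallyEq_polyZ hZ hx)]
  exact lieBracket_Y_diag_polyZ l α₀ α hx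

/-- with `Z = α₀ u D - u ∑_m α_m Y^m_m` (where `D(x)_i = x_i`),
every diagonal field `Y^l_l` commutes with `Z` on `{u ≠ 0}`. -/
theorem stmt_9 (n : ℕ) (hn : 1 ≤ n) (α₀ : ℂ) (α : Fin n → ℂ) (l : Fin n)
    (Z : (Fin n → ℂ) → Fin n → ℂ)
    (hZ : ∀ x i, Z x i = α₀ * u n x * x i - u n x * ∑ m : Fin n, α m * Y n m m x i) :
    ∀ x : Fin n → ℂ, u n x ≠ 0 → lieBracket n (Y n l l) Z x = 0 :=
  stmt_9_general n α₀ α l Z hZ
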